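/- arXiv:2206.14846 — 4 statements merged into one kernel-verified Lean document; each statement's English description precedes it below -/
import Mathlib

section
/- Let A, B be d×d real positive definite matrices with A ⪰ B (i.e., A − B is positive semidefinite). Then for any x ∈ ℝ^d, xᵀAx ≤ (xᵀBx) · det(A)/det(B). -/
/-!
With `S = B^{1/2}`, the matrix `C = S⁻¹ A S⁻¹` satisfies `C ⪰ 1`, so all its eigenvalues are
at least `1`; each of them is then bounded by their product `det C = det A / det B`, i.e.
`C ⪯ (det A / det B) • 1`. Conjugating back by `S` gives `A ⪯ (det A / det B) • B`, and the
inequality of quadratic forms follows.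
-/

open Matrix

section LoewnerOrder

open scoped MatrixOrder

namespace Matrix

variable {n : Type*} [Fintype n]

theorem dotProduct_mulVec_le_of_le {A B : Matrix n n ℝ} (hAB : A ≤ B) (x : n → ℝ) :
    x ⬝ᵥ (A *ᵥ x) ≤ x ⬝ᵥ (B *ᵥ x) := by
  have h := hAB.dotProduct_mulVec_nonneg x
  rwa [star_trivial, sub_mulVec, dotProduct_sub, sub_nonneg] at h

variable [DecidableEq n]

theorem le_det_smul_one_of_one_le {C : Matrix n n ℝ} (hC : 1 ≤ C) :
    C ≤ C.det • (1 : Matrix n n ℝ) := by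
  have hCh : C.IsHermitian := by simpa using hC.isHermitian.add isHermitian_one
  have one_le_eigenvalues : ∀ i, 1 ≤ hCh.eigenvalues i := fun i =>
    (CFC.one_le_iff C hCh.isSelfAdjoint).1 hC _ (hCh.eigenvalues_mem_spectrum_real i)
  rw [← Algebra.algebraMap_eq_smul_one]
  refine le_algebraMap_of_spectrum_le ?_ hCh.isSelfAdjoint
  rw [hCh.spectrum_real_eq_range_eigenvalues, hCh.det_eq_prod_eigenvalues]
  rintro _ ⟨i, rfl⟩
  simpa using Finset.prod_le_prod_of_subset_of_one_le (Finset.subset_univ {i})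
    (by simpa using zero_le_one.trans (one_le_eigenvalues i)) (fun j _ _ => one_le_eigenvalues j)

theorem le_det_div_det_smul_of_le {A B : Matrix n n ℝ} (hB : B.PosDef) (hBA : B ≤ A) :
    A ≤ (A.det / B.det) • B := by
  set S := CFC.sqrt B
  have hS : star S = S := (CFC.sqrt_nonneg B).isSelfAdjoint
  have hSS : S * S = B := CFC.sqrt_mul_sqrt_self B hB.posSemidef.nonneg
  have hdetS : S.det * S.det = B.det := by rw [← det_mul, hSS]
  have hSu : IsUnit S.det := by
    refine isUnit_iff_ne_zero.2 fun h => hB.det_pos.ne' ?_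
    rw [← hdetS, h, zero_mul]
  have hSinvS : S⁻¹ * S = 1 := nonsing_inv_mul S hSu
  have hSSinv : S * S⁻¹ = 1 := mul_nonsing_inv S hSu
  have hSinv : star S⁻¹ = S⁻¹ := by
    rw [star_eq_conjTranspose, conjTranspose_nonsing_inv, ← star_eq_conjTranspose, hS]
  set C := S⁻¹ * A * S⁻¹
  have one_le_C : 1 ≤ C := by
    have h := star_left_conjugate_le_conjugate hBA S⁻¹
    rwa [hSinv, ← hSS, ← Matrix.mul_assoc, hSinvS, Matrix.one_mul, hSSinv] at h
  have det_C : C.det = A.det / B.det := by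
    rw [det_mul, det_mul, det_nonsing_inv, Ring.inverse_eq_inv, ← hdetS]
    field_simp [hSu.ne_zero]
  have A_eq : A = star S * C * S := by
    rw [hS, ← Matrix.mul_assoc, ← Matrix.mul_assoc, hSSinv, Matrix.one_mul, Matrix.mul_assoc,
      hSinvS, Matrix.mul_one]
  calc A = star S * C * S := A_eq
    _ ≤ star S * (C.det • 1) * S :=
      star_left_conjugate_le_conjugate (le_det_smul_one_of_one_le one_le_C) S
    _ = (A.det / B.det) • B := by
      rw [hS, det_C, Matrix.mul_smul, Matrix.smul_mul, Matrix.mul_one, hSS]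

end Matrix

end LoewnerOrder

theorem quadratic_form_le_det_ratio_general {d : ℕ}
    (A B : Matrix (Fin d) (Fin d) ℝ)
    (hB : B.PosDef) (hAB : (A - B).PosSemidef)
    (x : Fin d → ℝ) :
    x ⬝ᵥ (A *ᵥ x) ≤ (x ⬝ᵥ (B *ᵥ x)) * (A.det / B.det) := by
  have h := dotProduct_mulVec_le_of_le (le_det_div_det_smul_of_le hB hAB) x
  rwa [smul_mulVec, dotProduct_smul, smul_eq_mul, mul_comm] at h

/-- If A ⪰ B are positive definite, then xᵀAx ≤ (xᵀBx) · det A / det B. -/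
theorem quadratic_form_le_det_ratio {d : ℕ}
    (A B : Matrix (Fin d) (Fin d) ℝ)
    (hA : A.PosDef) (hB : B.PosDef) (hAB : (A - B).PosSemidef)
    (x : Fin d → ℝ) :
    x ⬝ᵥ (A *ᵥ x) ≤ (x ⬝ᵥ (B *ᵥ x)) * (A.det / B.det) :=
  quadratic_form_le_det_ratio_general A B hB hAB x
end

section
/- Let x_1, …, x_T ∈ ℝ^d with ‖x_t‖₂ ≤ L for all t, let λ > 0, and define Σ_t = λI + ∑_{τ=1}^t x_τ x_τᵀ. Then ∑_{t=1}^T min(1, x_tᵀ Σ_{t-1}^{-1} x_t) ≤ 2 d log((dλ + T L²)/(dλ)). -/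
/-!
By the matrix determinant lemma, `det Σ_{t+1} = det Σ_t * (1 + x_tᵀ Σ_t⁻¹ x_t)`, so the sum of
`log (1 + x_tᵀ Σ_t⁻¹ x_t)` telescopes to `log (det Σ_T / det Σ_0)`, and `min 1 u ≤ 2 log (1 + u)`
bounds the left-hand side by twice that. Finally `det Σ_0 = λ^d`, while AM-GM on the eigenvalues
gives `det Σ_T ≤ (tr Σ_T / d)^d ≤ ((dλ + T L²) / d)^d`.
-/

open Matrix Finset

namespace Real

theorem min_one_le_two_mul_log_one_add {u : ℝ} (hu : 0 ≤ u) : min 1 u ≤ 2 * log (1 + u) := by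
  rcases le_or_gt u 1 with h | h
  · rw [min_eq_right h]
    -- `exp (u / 2) ≤ 1 / (1 - u / 2) ≤ 1 + u` on `[0, 1]`
    have hpos : 0 < 1 - u / 2 := by linarith
    have hexp : exp (u / 2) * (1 - u / 2) ≤ 1 := by
      calc exp (u / 2) * (1 - u / 2) ≤ exp (u / 2) * exp (-(u / 2)) := by
            gcongr; linarith [add_one_le_exp (-(u / 2))]
        _ = 1 := by rw [← exp_add, add_neg_cancel, exp_zero]
    have : exp (u / 2) ≤ 1 + u := by
      rw [← le_div_iff₀ hpos] at hexp
      exact hexp.trans (by rw [div_le_iff₀ hpos]; nlinarith)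
    have := (le_log_iff_exp_le (by linarith)).2 this
    linarith
  · rw [min_eq_left h.le]
    have := log_le_log (by norm_num) (by linarith : (2 : ℝ) ≤ 1 + u)
    linarith [log_two_gt_d9]

theorem prod_le_sum_div_card_pow {ι : Type*} (s : Finset ι) (z : ι → ℝ)
    (hz : ∀ i ∈ s, 0 ≤ z i) : ∏ i ∈ s, z i ≤ ((∑ i ∈ s, z i) / #s) ^ #s := by
  rcases s.eq_empty_or_nonempty with rfl | hs
  · simp
  have hcard : (0 : ℝ) < #s := by exact_mod_cast hs.card_pos
  have amgm := geom_mean_le_arith_mean s (fun _ ↦ 1) z (fun _ _ ↦ zero_le_one)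
    (by simpa using hcard) hz
  simp only [rpow_one, sum_const, nsmul_eq_mul, mul_one, one_mul] at amgm
  rwa [rpow_inv_le_iff_of_pos (prod_nonneg hz) (div_nonneg (sum_nonneg hz) hcard.le) hcard,
    rpow_natCast] at amgm

end Real

namespace Matrix

variable {n : Type*} [Fintype n] [DecidableEq n]

theorem PosSemidef.det_le_trace_div_card_pow {A : Matrix n n ℝ} (hA : A.PosSemidef) :
    A.det ≤ (A.trace / Fintype.card n) ^ Fintype.card n := by
  rw [hA.isHermitian.det_eq_prod_eigenvalues, hA.isHermitian.trace_eq_sum_eigenvalues]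
  simpa using Real.prod_le_sum_div_card_pow univ _ fun i _ ↦ hA.eigenvalues_nonneg i

theorem PosSemidef.det_le_of_trace_le {A : Matrix n n ℝ} (hA : A.PosSemidef) {c : ℝ}
    (hc : A.trace ≤ c) : A.det ≤ (c / Fintype.card n) ^ Fintype.card n := by
  refine hA.det_le_trace_div_card_pow.trans ?_
  have := hA.trace_nonneg
  gcongr

theorem trace_smul_one_add_sum_vecMulVec_self_le {ι : Type*} (lam : ℝ) (s : Finset ι)
    {x : ι → n → ℝ} {M : ℝ} (hx : ∀ i ∈ s, x i ⬝ᵥ x i ≤ M) :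
    (lam • (1 : Matrix n n ℝ) + ∑ i ∈ s, vecMulVec (x i) (x i)).trace ≤
      Fintype.card n * lam + #s * M := by
  have := sum_le_card_nsmul _ _ _ hx
  simp only [trace_add, trace_smul, trace_one, trace_sum, trace_vecMulVec, nsmul_eq_mul,
    smul_eq_mul] at this ⊢
  linarith

theorem det_add_vecMulVec {α : Type*} [CommRing α] {A : Matrix n n α} (hA : IsUnit A.det)
    (u v : n → α) : (A + vecMulVec u v).det = A.det * (1 + v ⬝ᵥ A⁻¹ *ᵥ u) := by
  rw [vecMulVec_eq Unit, det_add_replicateCol_mul_replicateRow hA,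
    det_unique (1 + _ : Matrix Unit Unit α), Matrix.mul_assoc, ← replicateCol_mulVec]
  rfl

theorem sum_range_log_one_add_eq_log_det_div {Sig : ℕ → Matrix n n ℝ} {x : ℕ → n → ℝ}
    (hdet : ∀ t, 0 < (Sig t).det) (hSig : ∀ t, Sig (t + 1) = Sig t + vecMulVec (x t) (x t))
    (T : ℕ) :
    ∑ t ∈ range T, Real.log (1 + x t ⬝ᵥ (Sig t)⁻¹ *ᵥ x t) =
      Real.log ((Sig T).det / (Sig 0).det) := by
  rw [Real.log_div (hdet T).ne' (hdet 0).ne', ← sum_range_sub fun t ↦ Real.log (Sig t).det]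
  refine sum_congr rfl fun t _ ↦ ?_
  have hstep := det_add_vecMulVec (hdet t).ne'.isUnit (x t) (x t)
  rw [← hSig] at hstep
  have hfactor : 1 + x t ⬝ᵥ (Sig t)⁻¹ *ᵥ x t ≠ 0 := by
    rintro h
    exact (hdet (t + 1)).ne' (by rw [hstep, h, mul_zero])
  rw [hstep, Real.log_mul (hdet t).ne' hfactor]
  ring

end Matrix

/-- Elliptical potential lemma. -/
theorem elliptical_potential {d T : ℕ}
    (x : ℕ → Fin d → ℝ) (L lam : ℝ) (hlam : 0 < lam)
    (hL : ∀ t, Real.sqrt (∑ i, (x t i) ^ 2) ≤ L)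
    (Sig : ℕ → Matrix (Fin d) (Fin d) ℝ)
    (hSig : ∀ t, Sig t = lam • (1 : Matrix (Fin d) (Fin d) ℝ) +
      ∑ τ ∈ Finset.range t, vecMulVec (x τ) (x τ)) :
    ∑ t ∈ Finset.range T, min 1 (x t ⬝ᵥ ((Sig t)⁻¹ *ᵥ x t)) ≤
      2 * d * Real.log ((d * lam + T * L ^ 2) / (d * lam)) := by
  have hpos : ∀ t, (Sig t).PosDef := fun t ↦ by
    rw [hSig t]
    exact (PosDef.one.smul hlam).add_posSemidef
      (posSemidef_sum _ fun τ _ ↦ by simpa using posSemidef_vecMulVec_self_star (x τ))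
  have hsucc : ∀ t, Sig (t + 1) = Sig t + vecMulVec (x t) (x t) := fun t ↦ by
    rw [hSig, hSig, sum_range_succ, add_assoc]
  have hdet0 : (Sig 0).det = lam ^ d := by simp [hSig 0]
  have htrace : (Sig T).trace ≤ d * lam + T * L ^ 2 := by
    have hnorm : ∀ τ ∈ range T, x τ ⬝ᵥ x τ ≤ L ^ 2 := fun τ _ ↦ by
      simpa [dotProduct, sq] using (Real.sqrt_le_iff.mp (hL τ)).2
    simpa [hSig T] using trace_smul_one_add_sum_vecMulVec_self_le lam (range T) hnorm
  have hdetT := (hpos T).posSemidef.det_le_of_trace_le htrace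
  rw [Fintype.card_fin] at hdetT
  have hratio : (Sig T).det / (Sig 0).det ≤ ((d * lam + T * L ^ 2) / (d * lam)) ^ d := by
    rwa [hdet0, div_le_iff₀ (by positivity), ← mul_pow, div_mul_eq_div_div,
      div_mul_cancel₀ _ hlam.ne']
  calc ∑ t ∈ range T, min 1 (x t ⬝ᵥ ((Sig t)⁻¹ *ᵥ x t))
      ≤ ∑ t ∈ range T, 2 * Real.log (1 + x t ⬝ᵥ ((Sig t)⁻¹ *ᵥ x t)) :=
        sum_le_sum fun t _ ↦ Real.min_one_le_two_mul_log_one_add <| by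
          simpa using (hpos t).inv.posSemidef.dotProduct_mulVec_nonneg (x t)
    _ = 2 * Real.log ((Sig T).det / (Sig 0).det) := by
        rw [← mul_sum, sum_range_log_one_add_eq_log_det_div (fun t ↦ (hpos t).det_pos) hsucc]
    _ ≤ 2 * Real.log (((d * lam + T * L ^ 2) / (d * lam)) ^ d) := by
        gcongr
        exact div_pos (hpos T).det_pos (hpos 0).det_pos
    _ = 2 * d * Real.log ((d * lam + T * L ^ 2) / (d * lam)) := by
        rw [Real.log_pow]; ring
end

section
/- Let (X_{i,k})_{i∈[N],k∈[K]} be independent Bernoulli random variables, conditionally on a σ-algebra 𝔉, with ∑_{i,k} E[X_{i,k} | 𝔉] ≤ (1 − Δ)(m + 1) where m is 𝔉-measurable. Then with probability at least 1 − δ (conditionally on 𝔉), ∑_{i,k} X_{i,k} ≤ (1 − Δ/2)(m + 1) + (2/Δ) log(1/δ). -/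
/-!
Chernoff's method with the fixed parameter `λ = Δ/2`. For a `{0,1}`-valued variable,
`exp (λ X) = 1 + (exp λ - 1) X`, so by independence the moment generating function of the sum
is at most `exp ((exp λ - 1) μ)`, where `μ ≤ (1 - Δ)(m + 1)` is the total mean. The elementary
inequality `(exp λ - 1)(1 - 2λ) ≤ λ (1 - λ)` bounds the Chernoff exponent
`(exp λ - 1) μ - λ t` by `log δ` at the threshold `t = (1 - Δ/2)(m + 1) + (2/Δ) log (1/δ)`.
-/

open MeasureTheory ProbabilityTheory Real

lemma exp_mul_of_eq_zero_or_eq_one {x : ℝ} (hx : x = 0 ∨ x = 1) (t : ℝ) :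
    exp (t * x) = 1 + (exp t - 1) * x := by
  rcases hx with rfl | rfl <;> simp

lemma exp_sub_one_mul_one_sub_two_mul_le {l : ℝ} (hl : 0 ≤ l) :
    (exp l - 1) * (1 - 2 * l) ≤ l * (1 - l) := by
  have h_inv : exp l * (1 - l) ≤ 1 := by
    calc exp l * (1 - l) ≤ exp l * exp (-l) := by gcongr; exact one_sub_le_exp_neg l
      _ = 1 := by rw [← exp_add, add_neg_cancel, exp_zero]
  nlinarith [add_one_le_exp l]

section Bernoulli

variable {Ω : Type*} {mΩ : MeasurableSpace Ω} {μ : Measure Ω} {X : Ω → ℝ}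

lemma integrable_of_eq_zero_or_eq_one [IsFiniteMeasure μ] (hX : AEStronglyMeasurable X μ)
    (hB : ∀ ω, X ω = 0 ∨ X ω = 1) : Integrable X μ :=
  Integrable.of_bound hX 1 <| .of_forall fun ω => by rcases hB ω with h | h <;> simp [h]

lemma integrable_exp_mul_of_eq_zero_or_eq_one [IsFiniteMeasure μ]
    (hX : AEStronglyMeasurable X μ) (hB : ∀ ω, X ω = 0 ∨ X ω = 1) (t : ℝ) :
    Integrable (fun ω => exp (t * X ω)) μ := by
  simp_rw [exp_mul_of_eq_zero_or_eq_one (hB _)]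
  exact (integrable_const 1).add ((integrable_of_eq_zero_or_eq_one hX hB).const_mul _)

variable [IsProbabilityMeasure μ]

lemma one_sub_measureReal_ge_le_measureReal_le (f : Ω → ℝ) (t : ℝ) :
    1 - μ.real {ω | t ≤ f ω} ≤ μ.real {ω | f ω ≤ t} := by
  have h_cover : {ω | f ω ≤ t} ∪ {ω | t ≤ f ω} = Set.univ := by
    ext ω; simp [le_total]
  have := measureReal_union_le (μ := μ) {ω | f ω ≤ t} {ω | t ≤ f ω}
  rw [h_cover, probReal_univ] at this
  linarith

lemma mgf_eq_of_eq_zero_or_eq_one (hX : AEStronglyMeasurable X μ)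
    (hB : ∀ ω, X ω = 0 ∨ X ω = 1) (t : ℝ) : mgf X μ t = 1 + (exp t - 1) * μ[X] := by
  simp_rw [mgf, exp_mul_of_eq_zero_or_eq_one (hB _)]
  rw [integral_add (integrable_const 1) ((integrable_of_eq_zero_or_eq_one hX hB).const_mul _),
    integral_const_mul]
  simp

lemma mgf_le_exp_of_eq_zero_or_eq_one (hX : AEStronglyMeasurable X μ)
    (hB : ∀ ω, X ω = 0 ∨ X ω = 1) (t : ℝ) : mgf X μ t ≤ exp ((exp t - 1) * μ[X]) := by
  rw [mgf_eq_of_eq_zero_or_eq_one hX hB, add_comm]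
  exact add_one_le_exp _

theorem measureReal_ge_sum_le_of_eq_zero_or_eq_one {ι : Type*} [Fintype ι] {X : ι → Ω → ℝ}
    (hmeas : ∀ i, Measurable (X i)) (hB : ∀ i ω, X i ω = 0 ∨ X i ω = 1)
    (hindep : iIndepFun X μ) {l : ℝ} (hl : 0 ≤ l) (ε : ℝ) :
    μ.real {ω | ε ≤ ∑ i, X i ω} ≤ exp ((exp l - 1) * ∑ i, μ[X i] - l * ε) := by
  have h_int : Integrable (fun ω => exp (l * (∑ i, X i) ω)) μ :=
    hindep.integrable_exp_mul_sum hmeas fun i _ =>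
      integrable_exp_mul_of_eq_zero_or_eq_one (hmeas i).aestronglyMeasurable (hB i) l
  have h_mgf : mgf (∑ i, X i) μ l ≤ exp ((exp l - 1) * ∑ i, μ[X i]) := by
    rw [hindep.mgf_sum hmeas, Finset.mul_sum, exp_sum]
    exact Finset.prod_le_prod (fun _ _ => mgf_nonneg) fun i _ =>
      mgf_le_exp_of_eq_zero_or_eq_one (hmeas i).aestronglyMeasurable (hB i) l
  calc μ.real {ω | ε ≤ ∑ i, X i ω} = μ.real {ω | ε ≤ (∑ i, X i) ω} := by simp
    _ ≤ exp (-l * ε) * mgf (∑ i, X i) μ l := measure_ge_le_exp_mul_mgf ε hl h_int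
    _ ≤ exp (-l * ε) * exp ((exp l - 1) * ∑ i, μ[X i]) := by gcongr
    _ = exp ((exp l - 1) * ∑ i, μ[X i] - l * ε) := by rw [← exp_add]; ring_nf

end Bernoulli

/-- Bernstein-type high probability bound for sums of independent Bernoulli
random variables whose total mean is at most (1-Δ)(m+1). -/
theorem bernoulli_sum_high_prob_bound {Ω : Type*} [MeasureSpace Ω]
    [IsProbabilityMeasure (ℙ : Measure Ω)] {N K : ℕ}
    (X : Fin N × Fin K → Ω → ℝ)
    (hmeas : ∀ p, Measurable (X p))
    (hBer : ∀ p ω, X p ω = 0 ∨ X p ω = 1)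
    (hindep : iIndepFun X ℙ)
    (Δ δ m : ℝ) (hΔ : Δ ∈ Set.Ioo (0:ℝ) 1) (hδ : δ ∈ Set.Ioo (0:ℝ) 1) (hm : 0 ≤ m)
    (hmean : ∑ p, ∫ ω, X p ω ∂ℙ ≤ (1 - Δ) * (m + 1)) :
    1 - δ ≤ (ℙ {ω | ∑ p, X p ω ≤ (1 - Δ / 2) * (m + 1) + (2 / Δ) * Real.log (1 / δ)}).toReal := by
  have hΔ0 : 0 < Δ := hΔ.1
  set t := (1 - Δ / 2) * (m + 1) + (2 / Δ) * Real.log (1 / δ)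
  have h_exponent : (exp (Δ / 2) - 1) * ∑ p, ∫ ω, X p ω ∂ℙ - Δ / 2 * t ≤ log δ := by
    have h_key := exp_sub_one_mul_one_sub_two_mul_le (l := Δ / 2) (by positivity)
    have h_rate : 0 ≤ exp (Δ / 2) - 1 := by linarith [add_one_le_exp (Δ / 2)]
    have h_mean := mul_le_mul_of_nonneg_left hmean h_rate
    have h_t : Δ / 2 * t = Δ / 2 * ((1 - Δ / 2) * (m + 1)) - log δ := by
      simp only [t, one_div, log_inv]; field_simp; ring
    rw [h_t]
    nlinarith [mul_le_mul_of_nonneg_right h_key (by linarith : 0 ≤ m + 1)]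
  have h_tail : (ℙ : Measure Ω).real {ω | t ≤ ∑ p, X p ω} ≤ δ :=
    (measureReal_ge_sum_le_of_eq_zero_or_eq_one hmeas hBer hindep (by positivity) t).trans <|
      (exp_le_exp.2 h_exponent).trans (exp_log hδ.1).le
  calc 1 - δ ≤ 1 - (ℙ : Measure Ω).real {ω | t ≤ ∑ p, X p ω} := by linarith
    _ ≤ _ := one_sub_measureReal_ge_le_measureReal_le (fun ω => ∑ p, X p ω) t
end

section
/- Let Q satisfy the truncated Bellman equation Q(s,a) = min{Λ/(1−γ), r(s,a) + b(s,a) + γ E_{s'∼P̂(·|s,a)} max_{a'} Q(s',a')} for a transition kernel P̂, and let Q* be the optimal Q-function of the MDP with kernel P and reward r, where 0 ≤ r(s,a) ≤ Λ and γ ∈ (0,1). If b(s,a) ≥ (γΛ/(1−γ)) · ‖P(·|s,a) − P̂(·|s,a)‖₁ for all (s,a), then Q(s,a) ≥ Q*(s,a) for all (s,a). -/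
/-! Let `M` be the largest gap `Q* - Q`. Where `Q` is truncated at `Λ/(1-γ)` the gap is `≤ 0`
because `Q*` lies below that level. Elsewhere, subtracting the two Bellman equations gives
`γ (P V* - P̂ V_Q) - b`; splitting `P V* - P̂ V_Q = (P - P̂) V* + P̂ (V* - V_Q)` bounds the first
term by `‖V*‖∞ ‖P - P̂‖₁ ≤ Λ/(1-γ) ‖P - P̂‖₁`, which the bonus absorbs, and the second by `M`.
Hence `M ≤ max 0 (γ M)`, which forces `M ≤ 0` since `γ < 1`. -/

open Finset

theorem sum_mul_le_mul_sum_abs {ι : Type*} [Fintype ι] {w v : ι → ℝ} {C : ℝ}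
    (hv : ∀ i, |v i| ≤ C) : ∑ i, w i * v i ≤ C * ∑ i, |w i| := by
  rw [mul_sum]
  refine sum_le_sum fun i _ => ?_
  calc w i * v i ≤ |w i| * |v i| := (le_abs_self _).trans (abs_mul _ _).le
    _ ≤ C * |w i| := by rw [mul_comm]; exact mul_le_mul_of_nonneg_right (hv i) (abs_nonneg _)

theorem sum_mul_le_of_le {ι : Type*} [Fintype ι] {p v : ι → ℝ} {M : ℝ}
    (hp : ∀ i, 0 ≤ p i) (hp1 : ∑ i, p i = 1) (hv : ∀ i, v i ≤ M) : ∑ i, p i * v i ≤ M :=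
  calc ∑ i, p i * v i ≤ ∑ i, p i * M := sum_le_sum fun i _ => mul_le_mul_of_nonneg_left (hv i) (hp i)
    _ = M := by rw [← sum_mul, hp1, one_mul]

theorem sum_mul_sub_sum_mul_le {ι : Type*} [Fintype ι] {p q V W : ι → ℝ} {C M : ℝ}
    (hq : ∀ i, 0 ≤ q i) (hq1 : ∑ i, q i = 1) (hV : ∀ i, |V i| ≤ C) (hVW : ∀ i, V i - W i ≤ M) :
    ∑ i, p i * V i - ∑ i, q i * W i ≤ C * ∑ i, |p i - q i| + M := by
  have hsplit : ∑ i, p i * V i - ∑ i, q i * W i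
      = ∑ i, (p i - q i) * V i + ∑ i, q i * (V i - W i) := by
    rw [← sum_sub_distrib, ← sum_add_distrib]
    exact sum_congr rfl fun i _ => by ring
  rw [hsplit]
  exact add_le_add (sum_mul_le_mul_sum_abs hV) (sum_mul_le_of_le hq hq1 hVW)

theorem abs_iSup_le {ι : Type*} [Nonempty ι] {f : ι → ℝ} {C : ℝ}
    (hf : ∀ i, 0 ≤ f i ∧ f i ≤ C) : |⨆ i, f i| ≤ C := by
  have h0 : 0 ≤ ⨆ i, f i := Real.iSup_nonneg fun i => (hf i).1
  rw [abs_of_nonneg h0]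
  exact ciSup_le fun i => (hf i).2

theorem ciSup_sub_ciSup_le {ι : Type*} [Finite ι] [Nonempty ι] {f g : ι → ℝ} {M : ℝ}
    (h : ∀ i, f i - g i ≤ M) : (⨆ i, f i) - ⨆ i, g i ≤ M :=
  sub_le_iff_le_add.mpr <| ciSup_le fun i => by
    linarith [h i, le_ciSup (Finite.bddAbove_range g) i]

theorem nonpos_of_forall_le_max_zero_mul {X : Type*} [Finite X] {D : X → ℝ} {γ : ℝ}
    (hγ : γ < 1) (h : ∀ M, (∀ x, D x ≤ M) → ∀ x, D x ≤ max 0 (γ * M)) (x : X) : D x ≤ 0 := by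
  have : Nonempty X := ⟨x⟩
  obtain ⟨x₀, hx₀⟩ := Finite.exists_max D
  have hD₀ : D x₀ ≤ 0 := by
    by_contra! hpos
    have hlt : max 0 (γ * D x₀) < D x₀ := max_lt hpos (by nlinarith)
    exact (h (D x₀) hx₀ x₀).not_gt hlt
  exact (hx₀ x).trans hD₀

theorem optimism_lemma_general {S A : Type*} [Fintype S] [Fintype A]
    (P Phat : S → A → S → ℝ) (r b Q Qstar : S → A → ℝ) (γ Λ : ℝ)
    (hγ : γ ∈ Set.Ioo (0:ℝ) 1)
    (hPhat : ∀ s a, (∀ s', 0 ≤ Phat s a s') ∧ ∑ s', Phat s a s' = 1)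
    (hQ : ∀ s a, Q s a =
      min (Λ / (1 - γ)) (r s a + b s a + γ * ∑ s', Phat s a s' * (⨆ a', Q s' a')))
    (hQstar : ∀ s a, Qstar s a = r s a + γ * ∑ s', P s a s' * (⨆ a', Qstar s' a'))
    (hQstarBd : ∀ s a, 0 ≤ Qstar s a ∧ Qstar s a ≤ Λ / (1 - γ))
    (hbonus : ∀ s a,
      (γ * Λ / (1 - γ)) * ∑ s', |P s a s' - Phat s a s'| ≤ b s a) :
    ∀ s a, Qstar s a ≤ Q s a := by
  intro s a
  have : Nonempty A := ⟨a⟩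
  refine sub_nonpos.mp <| nonpos_of_forall_le_max_zero_mul (D := fun x : S × A =>
    Qstar x.1 x.2 - Q x.1 x.2) hγ.2 (fun M hM ⟨s, a⟩ => ?_) (s, a)
  dsimp only
  have hsim := sum_mul_sub_sum_mul_le (p := P s a) (hPhat s a).1 (hPhat s a).2
    (fun s' => abs_iSup_le (hQstarBd s'))
    (fun s' => ciSup_sub_ciSup_le (g := fun a' => Q s' a') fun a' => hM (s', a'))
  rw [sub_le_iff_le_add, hQ, ← min_add_add_left]
  refine le_min ?_ ?_
  · linarith [(hQstarBd s a).2, le_max_left 0 (γ * M)]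
  · rw [hQstar]
    linear_combination
      mul_le_mul_of_nonneg_left hsim hγ.1.le + hbonus s a + le_max_right 0 (γ * M)

/-- Optimism: if the bonus dominates the model error, the optimistic truncated
Q-function upper bounds the optimal Q-function of the true MDP. -/
theorem optimism_lemma {S A : Type*} [Fintype S] [Fintype A] [Nonempty S] [Nonempty A]
    (P Phat : S → A → S → ℝ) (r b Q Qstar : S → A → ℝ) (γ Λ : ℝ)
    (hγ : γ ∈ Set.Ioo (0:ℝ) 1) (hΛ : 0 < Λ)
    (hr : ∀ s a, 0 ≤ r s a ∧ r s a ≤ Λ)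
    (hP : ∀ s a, (∀ s', 0 ≤ P s a s') ∧ ∑ s', P s a s' = 1)
    (hPhat : ∀ s a, (∀ s', 0 ≤ Phat s a s') ∧ ∑ s', Phat s a s' = 1)
    (hb0 : ∀ s a, 0 ≤ b s a)
    (hQ : ∀ s a, Q s a =
      min (Λ / (1 - γ)) (r s a + b s a + γ * ∑ s', Phat s a s' * (⨆ a', Q s' a')))
    (hQstar : ∀ s a, Qstar s a = r s a + γ * ∑ s', P s a s' * (⨆ a', Qstar s' a'))
    (hQstarBd : ∀ s a, 0 ≤ Qstar s a ∧ Qstar s a ≤ Λ / (1 - γ))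
    (hbonus : ∀ s a,
      (γ * Λ / (1 - γ)) * ∑ s', |P s a s' - Phat s a s'| ≤ b s a) :
    ∀ s a, Qstar s a ≤ Q s a :=
  optimism_lemma_general P Phat r b Q Qstar γ Λ hγ hPhat hQ hQstar hQstarBd hbonus
end
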